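/- There exists a constant c > 0 such that for every integer f ≥ 1 and every integer l ≥ 2 the following holds. Let S be chosen uniformly at random from the assignments {1,…,l}^f → {−1,+1}, and let M(S) denote the vector, indexed by the n_C = f·l^{f−1} columns C, whose C-th entry is the column sum ∑_{i ∈ C} S i. Then ∑_{vectors M} Pr(M(S) = M)^2 ≥ (c/(f·√l))^{n_C}; in particular there exists a vector M with Pr(M(S) = M) ≥ (c/(f·√l))^{n_C}. -/

import Mathlib

/-!
Let `Q(S)` be the sum of the squared column sums of the random sign vector `S`, one term per
column. Each column sum has second moment `l`, so `𝔼 Q = n_C · l`, and by Markov's inequality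
`Q(S) ≤ 2 n_C l` with probability at least `1/2`. On that event the vector of column sums is an
integer point of norm at most `√(2 n_C l)` in `ℤ^{n_C}`, and there are at most `(C √l)^{n_C}`
such points. A set of at most `A` outcomes carrying mass `1/2` forces `∑ Pr(M)^2 ≥ 1/(4A)` by
Cauchy–Schwarz, and the largest probability is at least `∑ Pr(M)^2`.
-/

open Finset

/-- The sum of `S` along the column through `y` in direction `b`. -/
def colSum (f l : ℕ) (S : (Fin f → Fin l) → ℤ) (b : Fin f) (y : Fin f → Fin l) : ℤ :=
  ∑ x : Fin l, S (Function.update y b x)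

/-- The probability, for `S` uniform on ±1 assignments of the grid `{1,…,l}^f`, that all
column sums of `S` are given by `M` (as a ratio of counts). -/
noncomputable def colProb (f l : ℕ) (M : Fin f → (Fin f → Fin l) → ℤ) : ℝ :=
  (Set.ncard {S : (Fin f → Fin l) → ℤ |
      (∀ p, S p = 1 ∨ S p = -1) ∧ ∀ b y, colSum f l S b y = M b y} : ℝ) / 2 ^ (l ^ f)

section SignVectors

variable (ι : Type*) [Fintype ι] [DecidableEq ι]

def signVectors : Finset (ι → ℤ) := Fintype.piFinset fun _ ↦ {1, -1}

lemma card_signVectors : #(signVectors ι) = 2 ^ Fintype.card ι := by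
  simp [signVectors]

variable {ι}

lemma mem_signVectors {S : ι → ℤ} : S ∈ signVectors ι ↔ ∀ i, S i = 1 ∨ S i = -1 := by
  simp [signVectors]

lemma sum_signVectors_mul_apply (p q : ι) :
    ∑ S ∈ signVectors ι, S p * S q = if p = q then 2 ^ Fintype.card ι else 0 := by
  split_ifs with hpq
  · subst hpq
    have hsq : ∀ S ∈ signVectors ι, S p * S p = 1 := fun S hS ↦ by
      rcases mem_signVectors.mp hS p with h | h <;> simp [h]
    simp [sum_congr rfl hsq, card_signVectors]
  · -- flipping the sign at `p` negates `S p * S q`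
    refine sum_involution (fun S _ ↦ Function.update S p (-S p)) ?_ ?_ ?_ ?_
    · intro S _
      simp [Function.update_of_ne (Ne.symm hpq)]
    · intro S hS _ h
      have hp := congrFun h p
      rcases mem_signVectors.mp hS p with h' | h' <;> simp [h'] at hp
    · intro S hS
      refine mem_signVectors.mpr fun i ↦ ?_
      rcases eq_or_ne i p with rfl | hi
      · rcases mem_signVectors.mp hS i with h | h <;> simp [h]
      · simpa [Function.update_of_ne hi] using mem_signVectors.mp hS i
    · intro S _
      simp

lemma sum_signVectors_sq_sum_comp {κ : Type*} [Fintype κ] (u : κ → ι) (hu : u.Injective) :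
    ∑ S ∈ signVectors ι, (∑ x, S (u x)) ^ 2 = Fintype.card κ * 2 ^ Fintype.card ι := by
  simp_rw [sq, sum_mul_sum]
  rw [sum_comm]
  refine (sum_congr rfl fun x _ ↦ sum_comm).trans ?_
  classical
  simp [sum_signVectors_mul_apply, hu.eq_iff]

end SignVectors

lemma card_le_two_mul_card_filter_le {α : Type*} (s : Finset α) (g : α → ℝ) {m : ℝ}
    (hm : 0 < m) (hg : ∀ x ∈ s, 0 ≤ g x) (hsum : ∑ x ∈ s, g x ≤ #s * m) :
    (#s : ℝ) ≤ 2 * #{x ∈ s | g x ≤ 2 * m} := by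
  have hsplit := card_filter_add_card_filter_not (s := s) (fun x ↦ g x ≤ 2 * m)
  have hbad : (#{x ∈ s | ¬ g x ≤ 2 * m} : ℝ) * (2 * m) ≤ #s * m :=
    calc (#{x ∈ s | ¬ g x ≤ 2 * m} : ℝ) * (2 * m)
        ≤ ∑ x ∈ s with ¬ g x ≤ 2 * m, g x := by
          rw [← nsmul_eq_mul]
          exact card_nsmul_le_sum _ _ _ fun x hx ↦ (not_le.mp (mem_filter.mp hx).2).le
      _ ≤ ∑ x ∈ s, g x :=
          sum_le_sum_of_subset_of_nonneg (filter_subset _ _) fun x hx _ ↦ hg x hx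
      _ ≤ #s * m := hsum
  have : (#s : ℝ) = #{x ∈ s | g x ≤ 2 * m} + #{x ∈ s | ¬ g x ≤ 2 * m} := by
    exact_mod_cast hsplit.symm
  nlinarith

section FiberProb

variable {α β : Type*} [DecidableEq β] (s : Finset α) (φ : α → β)

/-- The law of `φ` under the uniform distribution on `s`. -/
noncomputable def fiberProb (b : β) : ℝ := #{a ∈ s | φ a = b} / #s

lemma fiberProb_nonneg (b : β) : 0 ≤ fiberProb s φ b := by
  unfold fiberProb; positivity

lemma sum_fiberProb (t : Finset β) :
    ∑ b ∈ t, fiberProb s φ b = #{a ∈ s | φ a ∈ t} / #s := by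
  simp only [fiberProb, ← sum_div, ← sum_card_fiberwise_eq_card_filter, Nat.cast_sum]

lemma sum_fiberProb_le_one (t : Finset β) : ∑ b ∈ t, fiberProb s φ b ≤ 1 := by
  rw [sum_fiberProb]
  exact div_le_one_of_le₀ (by exact_mod_cast card_filter_le _ _) (Nat.cast_nonneg _)

lemma sum_sq_fiberProb_le_tsum (t : Finset β) :
    ∑ b ∈ t, fiberProb s φ b ^ 2 ≤ ∑' b, fiberProb s φ b ^ 2 := by
  refine Summable.sum_le_tsum _ (fun b _ ↦ sq_nonneg _)
    (summable_of_ne_finset_zero (s := s.image φ) fun b hb ↦ ?_)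
  have : #{a ∈ s | φ a = b} = 0 := by
    rw [card_eq_zero, filter_eq_empty_iff]
    exact fun a ha h ↦ hb (mem_image.mpr ⟨a, ha, h⟩)
  simp [fiberProb, this]

lemma one_div_four_card_image_le_sum_sq_fiberProb {t : Finset α} (hts : t ⊆ s)
    (ht : (#s : ℝ) ≤ 2 * #t) :
    1 / 4 / #(t.image φ) ≤ ∑ b ∈ t.image φ, fiberProb s φ b ^ 2 := by
  rcases t.eq_empty_or_nonempty with rfl | htne
  · simp
  have hs : (0 : ℝ) < #s := by exact_mod_cast (htne.mono hts).card_pos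
  have hA : (0 : ℝ) < #(t.image φ) := by exact_mod_cast (htne.image φ).card_pos
  have hmass : 1 / 2 ≤ ∑ b ∈ t.image φ, fiberProb s φ b := by
    have hsub : t ⊆ {a ∈ s | φ a ∈ t.image φ} := fun a ha ↦
      mem_filter.mpr ⟨hts ha, mem_image_of_mem φ ha⟩
    have hcard : (#t : ℝ) ≤ #{a ∈ s | φ a ∈ t.image φ} := by
      exact_mod_cast card_le_card hsub
    rw [sum_fiberProb, le_div_iff₀ hs]
    linarith
  have hCS := sq_sum_le_card_mul_sum_sq (s := t.image φ) (f := fiberProb s φ)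
  rw [div_le_iff₀ hA]
  nlinarith

lemma exists_sum_sq_fiberProb_le {t : Finset β} (ht : t.Nonempty) :
    ∃ b, ∑ c ∈ t, fiberProb s φ c ^ 2 ≤ fiberProb s φ b := by
  obtain ⟨b₀, -, hmax⟩ := exists_max_image t (fiberProb s φ) ht
  refine ⟨b₀, ?_⟩
  calc ∑ c ∈ t, fiberProb s φ c ^ 2
        ≤ ∑ c ∈ t, fiberProb s φ c * fiberProb s φ b₀ := by
        gcongr with c hc
        rw [sq]; exact mul_le_mul_of_nonneg_left (hmax c hc) (fiberProb_nonneg s φ c)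
    _ = (∑ c ∈ t, fiberProb s φ c) * fiberProb s φ b₀ := by rw [sum_mul]
    _ ≤ fiberProb s φ b₀ :=
        mul_le_of_le_one_left (fiberProb_nonneg s φ b₀) (sum_fiberProb_le_one s φ t)

end FiberProb

lemma hasSum_one_half_pow_natAbs : HasSum (fun a : ℤ ↦ (1 / 2 : ℝ) ^ a.natAbs) 3 := by
  have hneg : HasSum (fun n : ℕ ↦ (1 / 2 : ℝ) ^ (-(n + 1 : ℤ)).natAbs) 1 := by
    have h : (fun n : ℕ ↦ (1 / 2 : ℝ) ^ (-(n + 1 : ℤ)).natAbs)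
        = fun n ↦ (1 / 2) ^ n * (1 / 2) := by
      ext n
      rw [show (-(n + 1 : ℤ)).natAbs = n + 1 by omega, pow_succ]
    have h2 := hasSum_geometric_two.mul_right (1 / 2 : ℝ)
    rw [show (2 : ℝ) * (1 / 2) = 1 by norm_num] at h2
    rwa [h]
  have h3 := HasSum.of_nat_of_neg_add_one (f := fun a : ℤ ↦ (1 / 2 : ℝ) ^ a.natAbs)
    (by simpa using hasSum_geometric_two) hneg
  rwa [show (2 : ℝ) + 1 = 3 by norm_num] at h3

section LatticePoints

variable {ι : Type*} [Fintype ι] [DecidableEq ι]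

/-- Weighting `q` by `2 ^ (-∑ |q i|)` gives a product of one-dimensional sums, each at most
`3`. -/
lemma card_le_of_sum_natAbs_le (W : Finset (ι → ℤ)) (K : ℕ)
    (hW : ∀ q ∈ W, ∑ i, (q i).natAbs ≤ K) : (#W : ℝ) ≤ 2 ^ K * 3 ^ Fintype.card ι := by
  set w : ℤ → ℝ := fun a ↦ (1 / 2 : ℝ) ^ a.natAbs
  have hweight : ∀ q ∈ W, (1 : ℝ) ≤ 2 ^ K * ∏ i, w (q i) := fun q hq ↦ by
    calc (1 : ℝ) = 2 ^ K * (1 / 2) ^ K := by rw [← mul_pow]; norm_num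
      _ ≤ 2 ^ K * (1 / 2) ^ ∑ i, (q i).natAbs := by
          gcongr 2 ^ K * ?_
          exact pow_le_pow_of_le_one (by norm_num) (by norm_num) (hW q hq)
      _ = 2 ^ K * ∏ i, w (q i) := by rw [prod_pow_eq_pow_sum]
  have hbox : W ⊆ Fintype.piFinset fun i ↦ W.image (· i) := fun q hq ↦
    Fintype.mem_piFinset.mpr fun i ↦ mem_image_of_mem _ hq
  calc (#W : ℝ) = ∑ _q ∈ W, 1 := by simp
    _ ≤ ∑ q ∈ W, 2 ^ K * ∏ i, w (q i) := sum_le_sum hweight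
    _ ≤ ∑ q ∈ Fintype.piFinset (fun i ↦ W.image (· i)), 2 ^ K * ∏ i, w (q i) :=
        sum_le_sum_of_subset_of_nonneg hbox fun _ _ _ ↦ by positivity
    _ = 2 ^ K * ∏ i, ∑ a ∈ W.image (· i), w a := by rw [← mul_sum, prod_univ_sum]
    _ ≤ 2 ^ K * ∏ _i : ι, (3 : ℝ) := by
        gcongr with i
        exact sum_le_hasSum _ (fun _ _ ↦ by positivity) hasSum_one_half_pow_natAbs
    _ = 2 ^ K * 3 ^ Fintype.card ι := by rw [prod_const, card_univ]

lemma sq_ediv_mul_sq_le (v s : ℤ) (hs : 0 < s) :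
    (v / s) ^ 2 * s ^ 2 ≤ 2 * v ^ 2 + 2 * s ^ 2 := by
  have hq : s * (v / s) = v - v % s := by have := Int.mul_ediv_add_emod v s; omega
  have h0 := Int.emod_nonneg v hs.ne'
  have h1 := Int.emod_lt_of_pos v hs
  calc (v / s) ^ 2 * s ^ 2 = (v - v % s) ^ 2 := by rw [← hq]; ring
    _ ≤ 2 * v ^ 2 + 2 * (v % s) ^ 2 := by nlinarith [sq_nonneg (v + v % s)]
    _ ≤ 2 * v ^ 2 + 2 * s ^ 2 := by gcongr

/-- Writing `v = s * q + r` with `0 ≤ r < s` componentwise, the quotients satisfy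
`∑ i, q i ^ 2 ≤ 2 * K + 2 * card ι`, hence have small `ℓ¹`-norm. -/
lemma card_le_of_sum_sq_le (V : Finset (ι → ℤ)) {s K : ℕ} (hs : 0 < s)
    (hV : ∀ v ∈ V, ∑ i, v i ^ 2 ≤ K * s ^ 2) :
    (#V : ℝ) ≤ 4 ^ (K + Fintype.card ι) * (3 * s) ^ Fintype.card ι := by
  set n := Fintype.card ι
  have hs' : (0 : ℤ) < s := by exact_mod_cast hs
  set W := V.image fun v i ↦ v i / (s : ℤ)
  set R : Finset (ι → ℤ) := Fintype.piFinset fun _ ↦ Ico 0 (s : ℤ)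
  have hVsub : V ⊆ (W ×ˢ R).image fun p i ↦ s * p.1 i + p.2 i := fun v hv ↦ by
    refine mem_image.mpr ⟨(fun i ↦ v i / s, fun i ↦ v i % s), ?_, ?_⟩
    · refine mem_product.mpr ⟨mem_image_of_mem _ hv, Fintype.mem_piFinset.mpr fun i ↦ ?_⟩
      exact mem_Ico.mpr ⟨Int.emod_nonneg _ hs'.ne', Int.emod_lt_of_pos _ hs'⟩
    · funext i; exact Int.mul_ediv_add_emod (v i) s
  have hW : ∀ q ∈ W, ∑ i, (q i).natAbs ≤ 2 * K + 2 * n := by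
    simp only [W, mem_image, forall_exists_index, and_imp, forall_apply_eq_imp_iff₂]
    intro v hv
    have hsq : (∑ i, (v i / s) ^ 2) * s ^ 2 ≤ (2 * K + 2 * n) * s ^ 2 :=
      calc (∑ i, (v i / s) ^ 2) * s ^ 2 ≤ ∑ i, (2 * v i ^ 2 + 2 * (s : ℤ) ^ 2) := by
            rw [sum_mul]; exact sum_le_sum fun i _ ↦ sq_ediv_mul_sq_le _ _ hs'
        _ ≤ (2 * K + 2 * n) * s ^ 2 := by
            rw [sum_add_distrib, ← mul_sum, sum_const, card_univ, nsmul_eq_mul]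
            nlinarith [hV v hv]
    have hle := le_of_mul_le_mul_right hsq (by positivity)
    have : ((∑ i, (v i / (s : ℤ)).natAbs : ℕ) : ℤ) ≤ ∑ i, (v i / s) ^ 2 := by
      push_cast; exact sum_le_sum fun i _ ↦ by simpa using Int.natAbs_le_self_sq (v i / s)
    exact_mod_cast this.trans hle
  have hR : #R = s ^ n := by simp [R, n]
  calc (#V : ℝ) ≤ #W * #R := by
        exact_mod_cast (card_le_card hVsub).trans (card_image_le.trans (card_product _ _).le)
    _ ≤ 2 ^ (2 * K + 2 * n) * 3 ^ n * s ^ n := by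
        rw [hR, Nat.cast_pow]
        gcongr
        exact card_le_of_sum_natAbs_le W _ hW
    _ = 4 ^ (K + n) * (3 * s) ^ n := by
        rw [mul_pow, pow_add, pow_add, pow_mul, pow_mul]; norm_num; ring

end LatticePoints

section Grid

variable {f l : ℕ}

def colReps (b : Fin f) (x₀ : Fin l) : Finset (Fin f → Fin l) := {y | y b = x₀}

lemma card_colReps (b : Fin f) (x₀ : Fin l) : #(colReps b x₀) = l ^ (f - 1) := by
  simpa [colReps, Fintype.piFinset_univ] using
    Fintype.card_filter_piFinset_const_eq_of_mem (univ : Finset (Fin l)) b (mem_univ x₀)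

/-- Columns, each represented by its point whose `b`-th coordinate is `x₀`. -/
abbrev Column (x₀ : Fin l) := Σ b : Fin f, colReps b x₀

lemma card_column (x₀ : Fin l) : Fintype.card (Column (f := f) x₀) = f * l ^ (f - 1) := by
  simp [card_colReps]

lemma colSum_update (S : (Fin f → Fin l) → ℤ) (b : Fin f) (y : Fin f → Fin l) (x : Fin l) :
    colSum f l S b (Function.update y b x) = colSum f l S b y := by
  simp [colSum]

def colSqSum (x₀ : Fin l) (S : (Fin f → Fin l) → ℤ) : ℤ :=
  ∑ c : Column x₀, colSum f l S c.1 c.2 ^ 2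

lemma sum_colSqSum_signVectors (x₀ : Fin l) :
    ∑ S ∈ signVectors (Fin f → Fin l), colSqSum x₀ S = f * l ^ (f - 1) * l * 2 ^ l ^ f := by
  simp only [colSqSum, colSum]
  rw [sum_comm]
  simp only [fun c : Column x₀ ↦
    sum_signVectors_sq_sum_comp _ (Function.update_injective c.2.1 c.1)]
  simp [card_colReps]
  ring

lemma colProb_eq_fiberProb (M : Fin f → (Fin f → Fin l) → ℤ) :
    colProb f l M = fiberProb (signVectors (Fin f → Fin l)) (colSum f l) M := by
  have hset : {S : (Fin f → Fin l) → ℤ |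
        (∀ p, S p = 1 ∨ S p = -1) ∧ ∀ b y, colSum f l S b y = M b y}
      = ↑({S ∈ signVectors (Fin f → Fin l) | colSum f l S = M}) := by
    ext S
    simp [mem_signVectors, funext_iff]
  rw [colProb, fiberProb, hset, Set.ncard_coe_finset, card_signVectors]
  simp

end Grid

section Typical

variable {f l : ℕ}

def restrictToColumns (x₀ : Fin l) (M : Fin f → (Fin f → Fin l) → ℤ) :
    Column (f := f) x₀ → ℤ :=
  fun c ↦ M c.1 c.2

lemma colSum_eq_of_restrictToColumns_eq (x₀ : Fin l) {S S' : (Fin f → Fin l) → ℤ}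
    (h : restrictToColumns x₀ (colSum f l S) = restrictToColumns x₀ (colSum f l S')) :
    colSum f l S = colSum f l S' := by
  funext b y
  have := congrFun h ⟨b, Function.update y b x₀, by simp [colReps]⟩
  simpa [restrictToColumns, colSum_update] using this

lemma card_image_colSum_le (x₀ : Fin l) (T : Finset ((Fin f → Fin l) → ℤ)) {s K : ℕ}
    (hs : 0 < s) (hT : ∀ S ∈ T, colSqSum x₀ S ≤ K * s ^ 2) :
    (#(T.image (colSum f l)) : ℝ)
      ≤ 4 ^ (K + f * l ^ (f - 1)) * (3 * s) ^ (f * l ^ (f - 1)) := by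
  have hinj :
      #(T.image (colSum f l)) ≤ #(T.image fun S ↦ restrictToColumns x₀ (colSum f l S)) := by
    refine card_le_card_of_injOn (restrictToColumns x₀) (fun M hM ↦ ?_) ?_
    · obtain ⟨S, hS, rfl⟩ := mem_image.mp hM
      exact mem_image_of_mem _ hS
    · rintro _ hM _ hM' h
      obtain ⟨S, -, rfl⟩ := mem_image.mp hM
      obtain ⟨S', -, rfl⟩ := mem_image.mp hM'
      exact colSum_eq_of_restrictToColumns_eq x₀ h
  refine (Nat.cast_le.mpr hinj).trans ?_
  rw [← card_column x₀]
  refine card_le_of_sum_sq_le _ hs fun v hv ↦ ?_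
  obtain ⟨S, hS, rfl⟩ := mem_image.mp hv
  exact hT S hS

/-- The sign vectors `S` with `colSqSum S` at most twice its mean `n_C * l`. -/
noncomputable def typicalSignVectors (x₀ : Fin l) : Finset ((Fin f → Fin l) → ℤ) :=
  {S ∈ signVectors (Fin f → Fin l) | (colSqSum x₀ S : ℝ) ≤ 2 * (f * l ^ (f - 1) * l)}

lemma card_signVectors_le_two_mul_card_typical (x₀ : Fin l) (hf : 1 ≤ f) :
    (#(signVectors (Fin f → Fin l)) : ℝ) ≤ 2 * #(typicalSignVectors (f := f) x₀) := by
  have hl := x₀.pos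
  refine card_le_two_mul_card_filter_le _ _ (by positivity) (fun S _ ↦ ?_) ?_
  · exact Int.cast_nonneg_iff.mpr (sum_nonneg fun c _ ↦ sq_nonneg _)
  · rw [← Int.cast_sum, sum_colSqSum_signVectors, card_signVectors]
    simp [mul_comm]

lemma typicalSignVectors_nonempty (x₀ : Fin l) (hf : 1 ≤ f) :
    (typicalSignVectors (f := f) x₀).Nonempty := by
  have h := card_signVectors_le_two_mul_card_typical x₀ hf
  rw [card_signVectors, Nat.cast_pow, Nat.cast_ofNat] at h
  have : (0 : ℝ) < #(typicalSignVectors (f := f) x₀) := by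
    linarith [(by positivity : (0 : ℝ) < 2 ^ Fintype.card (Fin f → Fin l))]
  exact card_pos.mp (by exact_mod_cast this)

lemma card_image_typical_le (x₀ : Fin l) :
    (#((typicalSignVectors (f := f) x₀).image (colSum f l)) : ℝ)
      ≤ (384 * √l) ^ (f * l ^ (f - 1)) := by
  set n := f * l ^ (f - 1)
  set s := ⌈√l⌉₊
  have hsqrt : (1 : ℝ) ≤ √l := Real.one_le_sqrt.mpr (by exact_mod_cast x₀.pos)
  have hs : (s : ℝ) ≤ 2 * √l := by linarith [Nat.ceil_lt_add_one (Real.sqrt_nonneg (l : ℝ))]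
  have hls : (l : ℤ) ≤ s ^ 2 := by
    have : (l : ℝ) ≤ s ^ 2 := by
      rw [← Real.sq_sqrt (Nat.cast_nonneg l)]; gcongr; exact Nat.le_ceil _
    exact_mod_cast this
  have hcard := card_image_colSum_le x₀ (typicalSignVectors (f := f) x₀) (K := 2 * n) (s := s)
    (Nat.ceil_pos.mpr (by linarith)) fun S hS ↦ by
      have h : (colSqSum x₀ S : ℝ) ≤ 2 * n * l :=
        (mem_filter.mp hS).2.trans_eq (by push_cast [n]; ring)
      have h' : colSqSum x₀ S ≤ 2 * n * l := by exact_mod_cast h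
      push_cast
      nlinarith
  calc _ ≤ 4 ^ (2 * n + n) * (3 * s : ℝ) ^ n := hcard
    _ = (192 * s : ℝ) ^ n := by rw [show 2 * n + n = 3 * n by ring, pow_mul, ← mul_pow]; ring
    _ ≤ (384 * √l) ^ n := pow_le_pow_left₀ (by positivity) (by linarith) n

lemma pow_le_div_card_image_typical (x₀ : Fin l) (hf : 1 ≤ f) :
    (1 / 1536 / (f * √l)) ^ (f * l ^ (f - 1))
      ≤ 1 / 4 / #((typicalSignVectors (f := f) x₀).image (colSum f l)) := by
  set n := f * l ^ (f - 1)
  have hn : 1 ≤ n := Nat.one_le_iff_ne_zero.mpr (by have := x₀.pos; positivity)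
  have hsqrt : (0 : ℝ) < √l := Real.sqrt_pos.mpr (by exact_mod_cast x₀.pos)
  have hApos : (0 : ℝ) < #((typicalSignVectors (f := f) x₀).image (colSum f l)) := by
    exact_mod_cast ((typicalSignVectors_nonempty x₀ hf).image _).card_pos
  have hstep : 1 / 1536 / (f * √l) ≤ 1 / 4 * (1 / (384 * √l)) := by
    have hf' : (1 : ℝ) ≤ f := by exact_mod_cast hf
    rw [div_div, one_div_mul_one_div]
    exact one_div_le_one_div_of_le (by positivity) (by nlinarith)
  calc (1 / 1536 / (f * √l)) ^ n ≤ (1 / 4 * (1 / (384 * √l))) ^ n := by gcongr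
    _ ≤ 1 / 4 * (1 / (384 * √l)) ^ n := by
        rw [mul_pow]; gcongr; exact pow_le_of_le_one (by norm_num) (by norm_num) (by omega)
    _ = 1 / 4 / (384 * √l) ^ n := by rw [div_pow, one_pow, div_eq_mul_one_div (1 / 4 : ℝ)]
    _ ≤ _ := by gcongr; exact card_image_typical_le x₀

end Typical

/-- there is `c > 0` such that for all `f ≥ 1` and `l ≥ 2`,
`∑_M Pr(M(S) = M)^2 ≥ (c/(f√l))^{n_C}`, and in particular some `M` has
`Pr(M(S) = M) ≥ (c/(f√l))^{n_C}`, where `n_C = f·l^(f-1)`. -/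
theorem stmt9 :
    ∃ c : ℝ, 0 < c ∧
      ∀ f l : ℕ, 1 ≤ f → 2 ≤ l →
        ((c / (f * Real.sqrt l)) ^ (f * l ^ (f - 1)) ≤
          ∑' M : Fin f → (Fin f → Fin l) → ℤ, (colProb f l M) ^ 2) ∧
        ∃ M : Fin f → (Fin f → Fin l) → ℤ,
          (c / (f * Real.sqrt l)) ^ (f * l ^ (f - 1)) ≤ colProb f l M := by
  refine ⟨1 / 1536, by norm_num, fun f l hf hl ↦ ?_⟩
  let x₀ : Fin l := ⟨0, by omega⟩
  have hbound := pow_le_div_card_image_typical x₀ hf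
  have hsq := one_div_four_card_image_le_sum_sq_fiberProb _ (colSum f l) (filter_subset _ _)
    (card_signVectors_le_two_mul_card_typical x₀ hf)
  obtain ⟨M, hM⟩ :=
    exists_sum_sq_fiberProb_le _ (colSum f l) ((typicalSignVectors_nonempty x₀ hf).image _)
  simp only [colProb_eq_fiberProb]
  exact ⟨(hbound.trans hsq).trans (sum_sq_fiberProb_le_tsum _ _ _), M,
    hbound.trans (hsq.trans hM)⟩
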